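/- For real c > 0 and fixed x = (x₁,…,xₙ) ∈ ℝⁿ, ∫_{ℝⁿ} e^{−Σᵢ ỹᵢ²} Δ(ỹ + c·x) dỹ = c^{n(n−1)/2} Δ(x) π^{n/2}, where Δ is the Vandermonde determinant. -/

import Mathlib

/-!
Since `Δ(z) = det V(-z)` for the Vandermonde matrix `V(z)ᵢⱼ = zᵢ ^ j`, the substitution
`y ↦ -y` turns the integrand into `∏ᵢ w(yᵢ) · det V(y + v)` with `w(t) = e^{-t²}` and `v = -c x`.
The `i`-th row of `(w(yᵢ) (yᵢ + vᵢ) ^ j)ᵢⱼ` depends on `yᵢ` alone, so by Fubini the integral of its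
determinant is the determinant of the entrywise integrals `∫ w(t) (t + vᵢ) ^ j dt = pⱼ(vᵢ)`, where
`pⱼ` is a polynomial of degree `j` with leading coefficient `∫ w = √π`. A matrix `(pⱼ(vᵢ))` is
`V(v)` times an upper triangular matrix, so its determinant is `√π ^ n · det V(v)`; finally
`det V(c v) = c ^ (n(n-1)/2) · det V(v)`.
-/

open MeasureTheory Real

/-- The Vandermonde determinant `∏_{i<j} (x i - x j)`. -/
noncomputable def vandermondeProd (n : ℕ) (x : Fin n → ℝ) : ℝ :=
  ∏ p ∈ Finset.univ.filter (fun p : Fin n × Fin n => p.1 < p.2), (x p.1 - x p.2)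

open Finset Polynomial

namespace Matrix

variable {R : Type*} [CommRing R] {n : ℕ}

theorem det_eval_polynomials_eq_prod_coeff_mul_det_vandermonde (v : Fin n → R)
    (p : Fin n → R[X]) (hp : ∀ j, (p j).natDegree ≤ j) :
    (of fun i j => (p j).eval (v i)).det = (∏ j, (p j).coeff j) * (vandermonde v).det := by
  rw [eval_matrixOfPolynomials_eq_vandermonde_mul_matrixOfPolynomials v p hp, det_mul,
    det_of_isUpperTriangular (matrixOfPolynomials_blockTriangular p hp), mul_comm]
  rfl

theorem det_vandermonde_const_mul (c : R) (v : Fin n → R) :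
    (vandermonde fun i => c * v i).det = c ^ (n * (n - 1) / 2) * (vandermonde v).det := by
  have : vandermonde (fun i => c * v i) =
      of fun i (j : Fin n) => c ^ (j : ℕ) * vandermonde v i j := by
    ext i j
    simp [mul_pow]
  rw [this, det_mul_row, prod_pow_eq_pow_sum, Fin.sum_univ_eq_sum_range (fun j => j) n,
    sum_range_id]

end Matrix

theorem vandermondeProd_eq_det_vandermonde_neg (n : ℕ) (v : Fin n → ℝ) :
    vandermondeProd n v = (Matrix.vandermonde fun i => -v i).det := by
  rw [vandermondeProd, Matrix.det_vandermonde, prod_filter, ← univ_product_univ, prod_product]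
  refine prod_congr rfl fun i _ => ?_
  rw [← filter_lt_eq_Ioi, prod_filter]
  simp [neg_add_eq_sub]

namespace MeasureTheory

theorem integral_det_pi_rows {𝕜 ι E : Type*} [RCLike 𝕜] [Fintype ι] [DecidableEq ι]
    [MeasurableSpace E] {μ : Measure E} [SigmaFinite μ] (f : ι → ι → E → 𝕜)
    (hf : ∀ i j, Integrable (f i j) μ) :
    ∫ y, (Matrix.of fun i j => f i j (y i)).det ∂Measure.pi (fun _ => μ) =
      (Matrix.of fun i j => ∫ t, f i j t ∂μ).det := by
  simp_rw [← Matrix.det_transpose (Matrix.of _), Matrix.det_apply', Matrix.transpose_apply,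
    Matrix.of_apply]
  rw [integral_finsetSum _ fun σ _ => (Integrable.fintype_prod fun i => hf i (σ i)).const_mul _]
  simp_rw [integral_const_mul, integral_fintype_prod_eq_prod]

end MeasureTheory

section ShiftedMoments

variable (μ : Measure ℝ) (w : ℝ → ℝ)

noncomputable def shiftedMomentPoly (k : ℕ) : ℝ[X] :=
  ∑ m ∈ range (k + 1), C (k.choose m * ∫ t, t ^ (k - m) * w t ∂μ) * X ^ m

theorem natDegree_shiftedMomentPoly_le (k : ℕ) : (shiftedMomentPoly μ w k).natDegree ≤ k :=
  natDegree_sum_le_of_forall_le _ _ fun _ hm =>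
    (natDegree_C_mul_X_pow_le _ _).trans (Nat.lt_succ_iff.mp (mem_range.mp hm))

theorem coeff_shiftedMomentPoly_self (k : ℕ) :
    (shiftedMomentPoly μ w k).coeff k = ∫ t, w t ∂μ := by
  rw [shiftedMomentPoly, finsetSum_coeff]
  simp_rw [coeff_C_mul_X_pow]
  simp

theorem mul_add_pow_eq_sum (k : ℕ) (a t : ℝ) :
    w t * (t + a) ^ k =
      ∑ m ∈ range (k + 1), t ^ (k - m) * w t * (a ^ m * k.choose m) := by
  rw [add_comm, add_pow, mul_sum]
  exact sum_congr rfl fun m _ => by ring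

variable {μ w}

theorem integrable_mul_add_pow (hw : ∀ m : ℕ, Integrable (fun t => t ^ m * w t) μ) (k : ℕ)
    (a : ℝ) : Integrable (fun t => w t * (t + a) ^ k) μ := by
  simp_rw [mul_add_pow_eq_sum]
  exact integrable_finsetSum _ fun m _ => (hw _).mul_const _

theorem integral_mul_add_pow (hw : ∀ m : ℕ, Integrable (fun t => t ^ m * w t) μ) (k : ℕ)
    (a : ℝ) : ∫ t, w t * (t + a) ^ k ∂μ = (shiftedMomentPoly μ w k).eval a := by
  simp_rw [mul_add_pow_eq_sum]
  rw [integral_finsetSum _ fun m _ => (hw _).mul_const _]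
  simp only [shiftedMomentPoly, eval_finsetSum, eval_mul, eval_C, eval_pow, eval_X,
    integral_mul_const]
  exact sum_congr rfl fun m _ => by ring

end ShiftedMoments

theorem integral_prod_mul_det_vandermonde_add {n : ℕ} (μ : Measure ℝ) [SigmaFinite μ]
    (w : ℝ → ℝ) (hw : ∀ m : ℕ, Integrable (fun t => t ^ m * w t) μ) (v : Fin n → ℝ) :
    ∫ y, (∏ i, w (y i)) * (Matrix.vandermonde (y + v)).det ∂Measure.pi (fun _ => μ) =
      (∫ t, w t ∂μ) ^ n * (Matrix.vandermonde v).det := by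
  simp_rw [← Matrix.det_mul_column, Matrix.vandermonde_apply, Pi.add_apply]
  rw [integral_det_pi_rows (fun i j t => w t * (t + v i) ^ (j : ℕ))
    fun i j => integrable_mul_add_pow hw _ _]
  simp_rw [integral_mul_add_pow hw]
  rw [Matrix.det_eval_polynomials_eq_prod_coeff_mul_det_vandermonde v _
    fun j => natDegree_shiftedMomentPoly_le μ w j]
  simp [coeff_shiftedMomentPoly_self]

theorem integral_gaussian_mul_det_vandermonde_add {n : ℕ} (v : Fin n → ℝ) :
    ∫ y : Fin n → ℝ, exp (-∑ i, y i ^ 2) * (Matrix.vandermonde (y + v)).det =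
      √π ^ n * (Matrix.vandermonde v).det := by
  have hw (m : ℕ) : Integrable (fun t : ℝ => t ^ m * exp (-t ^ 2)) := by
    simpa using integrable_rpow_mul_exp_neg_mul_sq one_pos (s := m)
      (neg_one_lt_zero.trans_le m.cast_nonneg)
  have hZ : ∫ t : ℝ, exp (-t ^ 2) = √π := by simpa using integral_gaussian 1
  simp_rw [← sum_neg_distrib, exp_sum]
  rw [volume_pi, integral_prod_mul_det_vandermonde_add volume _ hw, hZ]

theorem gaussian_integral_scaled_shifted_vandermonde_general (n : ℕ) (c : ℝ)
    (x : Fin n → ℝ) :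
    ∫ y : Fin n → ℝ, Real.exp (-∑ i, (y i) ^ 2) *
        vandermondeProd n (fun i => y i + c * x i)
      = c ^ (n * (n - 1) / 2) * vandermondeProd n x * Real.pi ^ ((n : ℝ) / 2) := by
  set F : (Fin n → ℝ) → ℝ := fun y =>
    exp (-∑ i, y i ^ 2) * (Matrix.vandermonde (y + fun i => c * -x i)).det
  have hF_neg (y : Fin n → ℝ) :
      exp (-∑ i, y i ^ 2) * vandermondeProd n (fun i => y i + c * x i) = F (-y) := by
    simp only [F, vandermondeProd_eq_det_vandermonde_neg, Pi.neg_apply, neg_sq]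
    congr 3
    ext i
    simp only [Pi.neg_apply, Pi.add_apply]
    ring
  have hpow : √π ^ n = π ^ ((n : ℝ) / 2) := by
    rw [sqrt_eq_rpow, ← rpow_natCast, ← rpow_mul pi_pos.le, one_div_mul_eq_div]
  simp_rw [hF_neg]
  rw [integral_neg_eq_self, integral_gaussian_mul_det_vandermonde_add,
    Matrix.det_vandermonde_const_mul, ← vandermondeProd_eq_det_vandermonde_neg, hpow]
  ring

theorem gaussian_integral_scaled_shifted_vandermonde (n : ℕ) (c : ℝ) (hc : 0 < c)
    (x : Fin n → ℝ) :
    ∫ y : Fin n → ℝ, Real.exp (-∑ i, (y i) ^ 2) *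
        vandermondeProd n (fun i => y i + c * x i)
      = c ^ (n * (n - 1) / 2) * vandermondeProd n x * Real.pi ^ ((n : ℝ) / 2) :=
  gaussian_integral_scaled_shifted_vandermonde_general n c x
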